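/- Let S and Y be discrete semigroups with identities and nets E₁, E₂ in P_f(S), P_f(Y). Let π : S → Y be a surjective homomorphism with d*_{E₁}(π⁻¹(B)) = d*_{E₂}(B) for every B ⊆ Y, and let π̃ : βS → βY be its continuous extension. Then π̃ maps D*_{E₁} onto D*_{E₂}. -/

import Mathlib

open scoped Classical symmDiff

/-- The translate `F · s` of a finite piece `F` by an element of `S ∪ {1}`
(`none` meaning "no shift"). -/
def netShift {S : Type*} [Mul S] (F : Set S) : Option S → Set S
  | none => F
  | some t => (· * t) '' F

/-- Upper Banach density of `A ⊆ S` with respect to a net `F = ⟨F i⟩` of finite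
nonempty subsets of `S`, indexed by a directed preorder `I`. -/
noncomputable def uBD {S : Type*} [Mul S] {I : Type*} [Preorder I]
    (F : I → Set S) (A : Set S) : ℝ :=
  sSup {α : ℝ | ∀ i₀ : I, ∃ i, i₀ ≤ i ∧ ∃ s : Option S,
    α * ((F i).ncard : ℝ) ≤ ((A ∩ netShift (F i) s).ncard : ℝ)}

/-!
The sets of zero upper Banach density form an ideal, since `uBD` is monotone and subadditive.
Given `q ∈ D*_{E₂}`, every `π⁻¹(B)` with `B ∈ q` has positive density, so these preimages
together with the complements of null sets generate a proper filter on `S`. Any ultrafilter `p`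
refining it lies in `D*_{E₁}` (a null set cannot belong to `p`, as its complement does), and
`π̃ p = q` because `p` contains `π⁻¹(B)` for every `B ∈ q`.
-/

open Filter Set

section UpperBanachDensity

variable {S : Type*} [Mul S] {I : Type*} [Preorder I] {F : I → Set S} {A B : Set S}

lemma netShift_finite {F : Set S} (hF : F.Finite) : ∀ s, (netShift F s).Finite
  | none => hF
  | some _ => hF.image _

lemma ncard_netShift_le {F : Set S} (hF : F.Finite) : ∀ s, (netShift F s).ncard ≤ F.ncard
  | none => le_rfl
  | some _ => ncard_image_le hF

lemma ncard_inter_netShift_le {F : Set S} (hF : F.Finite) (A : Set S) (s : Option S) :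
    (A ∩ netShift F s).ncard ≤ F.ncard :=
  (ncard_inter_le_ncard_right _ _ (netShift_finite hF s)).trans (ncard_netShift_le hF s)

lemma cast_ncard_pos (hfin : ∀ i, (F i).Finite) (hne : ∀ i, (F i).Nonempty) (i : I) :
    (0 : ℝ) < (F i).ncard := by
  exact_mod_cast (ncard_pos (hfin i)).mpr (hne i)

-- `uBD F A` is definitionally `sSup (uBDCandidates F A)`.
def uBDCandidates (F : I → Set S) (A : Set S) : Set ℝ :=
  {α | ∀ i₀ : I, ∃ i, i₀ ≤ i ∧ ∃ s : Option S,
    α * ((F i).ncard : ℝ) ≤ ((A ∩ netShift (F i) s).ncard : ℝ)}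

lemma zero_mem_uBDCandidates : (0 : ℝ) ∈ uBDCandidates F A :=
  fun i₀ => ⟨i₀, le_rfl, none, by simp⟩

variable [Nonempty I]

lemma uBDCandidates_subset_Iic_one (hfin : ∀ i, (F i).Finite) (hne : ∀ i, (F i).Nonempty) :
    uBDCandidates F A ⊆ Iic 1 := by
  intro α hα
  obtain ⟨i, -, s, h⟩ := hα (Classical.arbitrary I)
  refine le_of_mul_le_mul_right (h.trans ?_) (cast_ncard_pos hfin hne i)
  simpa using (Nat.cast_le.mpr (ncard_inter_netShift_le (hfin i) A s) :
    ((A ∩ netShift (F i) s).ncard : ℝ) ≤ (F i).ncard)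

lemma le_uBD (hfin : ∀ i, (F i).Finite) (hne : ∀ i, (F i).Nonempty) {α : ℝ}
    (hα : α ∈ uBDCandidates F A) : α ≤ uBD F A :=
  le_csSup ⟨1, uBDCandidates_subset_Iic_one hfin hne⟩ hα

lemma exists_ncard_inter_netShift_lt (hfin : ∀ i, (F i).Finite) (hne : ∀ i, (F i).Nonempty)
    {β : ℝ} (hβ : uBD F A < β) :
    ∃ i₀, ∀ i, i₀ ≤ i → ∀ s, ((A ∩ netShift (F i) s).ncard : ℝ) < β * (F i).ncard := by
  have := notMem_of_csSup_lt hβ ⟨1, uBDCandidates_subset_Iic_one hfin hne⟩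
  simpa [uBDCandidates] using this

lemma uBD_mono (hfin : ∀ i, (F i).Finite) (hne : ∀ i, (F i).Nonempty) (hAB : A ⊆ B) :
    uBD F A ≤ uBD F B := by
  refine csSup_le ⟨0, zero_mem_uBDCandidates⟩ fun α hα => le_uBD hfin hne fun i₀ => ?_
  obtain ⟨i, hi, s, h⟩ := hα i₀
  refine ⟨i, hi, s, h.trans ?_⟩
  exact_mod_cast ncard_le_ncard (inter_subset_inter_left _ hAB)
    ((netShift_finite (hfin i) s).subset inter_subset_right)

lemma uBD_union_le (hfin : ∀ i, (F i).Finite) (hne : ∀ i, (F i).Nonempty)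
    (hdir : ∀ i j : I, ∃ k, i ≤ k ∧ j ≤ k) : uBD F (A ∪ B) ≤ uBD F A + uBD F B := by
  refine csSup_le ⟨0, zero_mem_uBDCandidates⟩ fun α hα =>
    le_of_forall_pos_lt_add fun ε hε => ?_
  obtain ⟨iA, hiA⟩ := exists_ncard_inter_netShift_lt hfin hne
    (lt_add_of_pos_right (uBD F A) (half_pos hε))
  obtain ⟨iB, hiB⟩ := exists_ncard_inter_netShift_lt hfin hne
    (lt_add_of_pos_right (uBD F B) (half_pos hε))
  obtain ⟨k, hAk, hBk⟩ := hdir iA iB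
  obtain ⟨i, hki, s, hαi⟩ := hα k
  have hsplit : (((A ∪ B) ∩ netShift (F i) s).ncard : ℝ)
      ≤ (A ∩ netShift (F i) s).ncard + (B ∩ netShift (F i) s).ncard := by
    rw [union_inter_distrib_right]
    exact_mod_cast ncard_union_le _ _
  refine lt_of_mul_lt_mul_right ?_ (cast_ncard_pos hfin hne i).le
  calc α * (F i).ncard ≤ (((A ∪ B) ∩ netShift (F i) s).ncard : ℝ) := hαi
    _ ≤ (A ∩ netShift (F i) s).ncard + (B ∩ netShift (F i) s).ncard := hsplit
    _ < (uBD F A + ε / 2) * (F i).ncard + (uBD F B + ε / 2) * (F i).ncard :=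
      add_lt_add (hiA i (hAk.trans hki) s) (hiB i (hBk.trans hki) s)
    _ = (uBD F A + uBD F B + ε) * (F i).ncard := by ring

lemma uBD_empty_nonpos (hfin : ∀ i, (F i).Finite) (hne : ∀ i, (F i).Nonempty) :
    uBD F ∅ ≤ 0 := by
  refine csSup_le ⟨0, zero_mem_uBDCandidates⟩ fun α hα => ?_
  obtain ⟨i, -, s, h⟩ := hα (Classical.arbitrary I)
  exact le_of_mul_le_mul_right (by simpa using h) (cast_ncard_pos hfin hne i)

lemma nonempty_of_uBD_pos (hfin : ∀ i, (F i).Finite) (hne : ∀ i, (F i).Nonempty)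
    (hA : 0 < uBD F A) : A.Nonempty := by
  rw [nonempty_iff_ne_empty]
  rintro rfl
  exact (uBD_empty_nonpos hfin hne).not_gt hA

def densityConull (F : I → Set S) (hfin : ∀ i, (F i).Finite) (hne : ∀ i, (F i).Nonempty)
    (hdir : ∀ i j : I, ∃ k, i ≤ k ∧ j ≤ k) : Filter S :=
  comk (fun A => uBD F A ≤ 0) (uBD_empty_nonpos hfin hne)
    (fun _ ht _ hst => (uBD_mono hfin hne hst).trans ht)
    (fun _ hs _ ht => (uBD_union_le hfin hne hdir).trans (by linarith))

theorem exists_ultrafilter_le_forall_uBD_pos (hfin : ∀ i, (F i).Finite)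
    (hne : ∀ i, (F i).Nonempty) (hdir : ∀ i j : I, ∃ k, i ≤ k ∧ j ≤ k) {f : Filter S}
    (hf : ∀ A ∈ f, 0 < uBD F A) : ∃ p : Ultrafilter S, ↑p ≤ f ∧ ∀ A ∈ p, 0 < uBD F A := by
  have : (f ⊓ densityConull F hfin hne hdir).NeBot := by
    refine forall_mem_nonempty_iff_neBot.mp fun U hU => ?_
    obtain ⟨s, hs, t, ht, rfl⟩ := mem_inf_iff.mp hU
    refine nonempty_of_uBD_pos hfin hne ?_
    have hcover : s ⊆ (s ∩ t) ∪ tᶜ := fun x hx => (em (x ∈ t)).imp (⟨hx, ·⟩) id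
    have := (uBD_mono hfin hne hcover).trans (uBD_union_le hfin hne hdir)
    linarith [hf s hs, mem_comk.mp ht]
  obtain ⟨p, hp⟩ := exists_ultrafilter_le (f ⊓ densityConull F hfin hne hdir)
  refine ⟨p, hp.trans inf_le_left, fun A hA => lt_of_not_ge fun hA0 => ?_⟩
  exact Ultrafilter.compl_notMem_iff.mpr hA (hp (mem_inf_of_right (compl_mem_comk.mpr hA0)))

end UpperBanachDensity

theorem map_DStar_onto_DStar_general {S Y : Type*} [Monoid S] [Monoid Y]
    {I₁ I₂ : Type*} [Preorder I₁] [Preorder I₂] [Nonempty I₁]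
    (E₁ : I₁ → Set S) (E₂ : I₂ → Set Y)
    (h₁fin : ∀ i, (E₁ i).Finite) (h₁ne : ∀ i, (E₁ i).Nonempty)
    (h₁dir : ∀ i j : I₁, ∃ k, i ≤ k ∧ j ≤ k)
    (π : S → Y)
    (hdens : ∀ B : Set Y, uBD E₁ (π ⁻¹' B) = uBD E₂ B) :
    Ultrafilter.map π '' {p : Ultrafilter S | ∀ A ∈ p, 0 < uBD E₁ A}
      = {q : Ultrafilter Y | ∀ B ∈ q, 0 < uBD E₂ B} := by
  ext q
  constructor
  · rintro ⟨p, hp, rfl⟩ B hB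
    exact hdens B ▸ hp _ hB
  · intro hq
    have hpreimage : ∀ A ∈ comap π q, 0 < uBD E₁ A := by
      rintro A ⟨B, hB, hBA⟩
      exact (hdens B ▸ hq B hB).trans_le (uBD_mono h₁fin h₁ne hBA)
    obtain ⟨p, hpq, hp⟩ := exists_ultrafilter_le_forall_uBD_pos h₁fin h₁ne h₁dir hpreimage
    exact ⟨p, hp, Ultrafilter.coe_le_coe.mp ((map_mono hpq).trans map_comap_le)⟩

theorem map_DStar_onto_DStar {S Y : Type*} [Monoid S] [Monoid Y]
    {I₁ I₂ : Type*} [Preorder I₁] [Preorder I₂] [Nonempty I₁] [Nonempty I₂]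
    (E₁ : I₁ → Set S) (E₂ : I₂ → Set Y)
    (h₁fin : ∀ i, (E₁ i).Finite) (h₁ne : ∀ i, (E₁ i).Nonempty)
    (h₂fin : ∀ i, (E₂ i).Finite) (h₂ne : ∀ i, (E₂ i).Nonempty)
    (h₁dir : ∀ i j : I₁, ∃ k, i ≤ k ∧ j ≤ k) (h₂dir : ∀ i j : I₂, ∃ k, i ≤ k ∧ j ≤ k)
    (π : S → Y) (hhom : ∀ a b : S, π (a * b) = π a * π b) (hsurj : Function.Surjective π)
    (hdens : ∀ B : Set Y, uBD E₁ (π ⁻¹' B) = uBD E₂ B) :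
    Ultrafilter.map π '' {p : Ultrafilter S | ∀ A ∈ p, 0 < uBD E₁ A}
      = {q : Ultrafilter Y | ∀ B ∈ q, 0 < uBD E₂ B} :=
  map_DStar_onto_DStar_general E₁ E₂ h₁fin h₁ne h₁dir π hdens
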